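/- Let c > 0 and γ > 0 be real numbers and let λ ∈ ℂ. Suppose f : ℝ → ℂ is four times continuously differentiable on [0,1] and satisfies f⁗(x) + λ²·f(x) = 0 for all x ∈ [0,1], with boundary conditions f(0) = 0, f(1) = 0, f''(1) = 0, and f''(0) = (c·λ + γ)·f'(0). Then the identity ∫₀¹ |f''(x)|² dx + λ²·∫₀¹ |f(x)|² dx + (c·λ + γ)·|f'(0)|² = 0 holds (as an equality of complex numbers). -/

import Mathlib

open Complex Set MeasureTheory

private lemma ibp01 (u v u' v' : ℝ → ℂ)
    (hu : ContinuousOn u (Icc 0 1)) (hv : ContinuousOn v (Icc 0 1))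
    (hu' : ContinuousOn u' (Icc 0 1)) (hv' : ContinuousOn v' (Icc 0 1))
    (hud : ∀ x ∈ Icc (0:ℝ) 1, HasDerivWithinAt u (u' x) (Icc 0 1) x)
    (hvd : ∀ x ∈ Icc (0:ℝ) 1, HasDerivWithinAt v (v' x) (Icc 0 1) x) :
    (∫ x in (0:ℝ)..1, (u' x * v x + u x * v' x)) = u 1 * v 1 - u 0 * v 0 := by
  have h01 : (0:ℝ) ≤ 1 := by norm_num
  apply intervalIntegral.integral_eq_sub_of_hasDeriv_right_of_le h01 (hu.mul hv)
  · intro x hx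
    have hx' : x ∈ Icc (0:ℝ) 1 := Ioo_subset_Icc_self hx
    exact (((hud x hx').mul (hvd x hx')).hasDerivAt
      (Icc_mem_nhds hx.1 hx.2)).hasDerivWithinAt
  · apply ContinuousOn.intervalIntegrable
    rw [uIcc_of_le h01]
    exact (hu'.mul hv).add (hu.mul hv')

private lemma mul_conj_self (z : ℂ) : z * (starRingEnd ℂ) z = ((‖z‖^2 : ℝ) : ℂ) := by
  rw [Complex.mul_conj, Complex.normSq_eq_norm_sq]

/-- Energy identity
`∫₀¹ |f''|² + λ² ∫₀¹ |f|² + (c λ + γ) |f'(0)|² = 0` for solutions of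
`f⁗ + λ² f = 0` with `f(0)=f(1)=f''(1)=0`, `f''(0) = (c λ + γ) f'(0)`. -/
theorem stmt_4 (c γ : ℝ) (hc : 0 < c) (hγ : 0 < γ) (lam : ℂ)
    (f : ℝ → ℂ)
    (hf : ContDiffOn ℝ 4 f (Set.Icc 0 1))
    (hode : ∀ x ∈ Set.Icc (0 : ℝ) 1,
      iteratedDerivWithin 4 f (Set.Icc 0 1) x + lam ^ 2 * f x = 0)
    (hbc0 : f 0 = 0) (hbc1 : f 1 = 0)
    (hbc2 : iteratedDerivWithin 2 f (Set.Icc 0 1) 1 = 0)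
    (hbc3 : iteratedDerivWithin 2 f (Set.Icc 0 1) 0
      = ((c : ℂ) * lam + (γ : ℂ)) * iteratedDerivWithin 1 f (Set.Icc 0 1) 0) :
    ((∫ x in (0 : ℝ)..1, ‖iteratedDerivWithin 2 f (Set.Icc 0 1) x‖ ^ 2 : ℝ) : ℂ)
      + lam ^ 2 * ((∫ x in (0 : ℝ)..1, ‖f x‖ ^ 2 : ℝ) : ℂ)
      + ((c : ℂ) * lam + (γ : ℂ))
          * ((‖iteratedDerivWithin 1 f (Set.Icc 0 1) 0‖ ^ 2 : ℝ) : ℂ) = 0 := by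
  have h01 : (0:ℝ) ≤ 1 := by norm_num
  have hud : UniqueDiffOn ℝ (Icc (0:ℝ) 1) := uniqueDiffOn_Icc (by norm_num)
  set g : ℕ → ℝ → ℂ := fun n => iteratedDerivWithin n f (Icc 0 1) with hg
  have hg0 : g 0 = f := iteratedDerivWithin_zero
  have hcont : ∀ n : ℕ, n ≤ 4 → ContinuousOn (g n) (Icc 0 1) := fun n hn =>
    hf.continuousOn_iteratedDerivWithin (by exact_mod_cast hn) hud
  have hderiv : ∀ n : ℕ, n < 4 → ∀ x ∈ Icc (0:ℝ) 1,
      HasDerivWithinAt (g n) (g (n+1) x) (Icc 0 1) x := by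
    intro n hn x hx
    have hd := (hf.differentiableOn_iteratedDerivWithin (by exact_mod_cast hn) hud x hx)
    have := hd.hasDerivWithinAt
    rwa [← iteratedDerivWithin_succ] at this
  have hfd : ∀ x ∈ Icc (0:ℝ) 1, HasDerivWithinAt f (g 1 x) (Icc 0 1) x := by
    intro x hx; rw [← hg0]; exact hderiv 0 (by norm_num) x hx
  have hconjcont : ∀ n : ℕ, n ≤ 4 →
      ContinuousOn (fun x => (starRingEnd ℂ) (g n x)) (Icc 0 1) := fun n hn =>
    (hcont n hn).star
  have hfcont : ContinuousOn f (Icc (0:ℝ) 1) := hf.continuousOn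
  -- First integration by parts
  have key1 : (∫ x in (0:ℝ)..1, (g 4 x * (starRingEnd ℂ) (f x)
      + g 3 x * (starRingEnd ℂ) (g 1 x))) = 0 := by
    have := ibp01 (g 3) (fun x => (starRingEnd ℂ) (f x)) (g 4)
      (fun x => (starRingEnd ℂ) (g 1 x))
      (hcont 3 (by norm_num)) hfcont.star (hcont 4 le_rfl) (hconjcont 1 (by norm_num))
      (hderiv 3 (by norm_num)) (fun x hx => (hfd x hx).star)
    rw [this]
    simp [hbc0, hbc1]
  -- Second integration by parts
  have key2 : (∫ x in (0:ℝ)..1, (g 3 x * (starRingEnd ℂ) (g 1 x)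
      + g 2 x * (starRingEnd ℂ) (g 2 x)))
      = -(((c : ℂ) * lam + (γ : ℂ)) * ((‖g 1 0‖^2 : ℝ) : ℂ)) := by
    have := ibp01 (g 2) (fun x => (starRingEnd ℂ) (g 1 x)) (g 3)
      (fun x => (starRingEnd ℂ) (g 2 x))
      (hcont 2 (by norm_num)) (hconjcont 1 (by norm_num)) (hcont 3 (by norm_num))
      (hconjcont 2 (by norm_num))
      (hderiv 2 (by norm_num)) (fun x hx => (hderiv 1 (by norm_num) x hx).star)
    rw [this]
    show g 2 1 * _ - g 2 0 * _ = _
    rw [show g 2 1 = 0 from hbc2, show g 2 0 = ((c : ℂ) * lam + (γ : ℂ)) * g 1 0 from hbc3]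
    rw [mul_assoc, mul_conj_self]
    ring
  -- integrability of the pieces
  have int1 : IntervalIntegrable (fun x => g 4 x * (starRingEnd ℂ) (f x)) volume 0 1 := by
    apply ContinuousOn.intervalIntegrable; rw [uIcc_of_le h01]
    exact (hcont 4 le_rfl).mul hfcont.star
  have int2 : IntervalIntegrable (fun x => g 3 x * (starRingEnd ℂ) (g 1 x)) volume 0 1 := by
    apply ContinuousOn.intervalIntegrable; rw [uIcc_of_le h01]
    exact (hcont 3 (by norm_num)).mul (hconjcont 1 (by norm_num))
  have int3 : IntervalIntegrable (fun x => g 2 x * (starRingEnd ℂ) (g 2 x)) volume 0 1 := by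
    apply ContinuousOn.intervalIntegrable; rw [uIcc_of_le h01]
    exact (hcont 2 (by norm_num)).mul (hconjcont 2 (by norm_num))
  rw [intervalIntegral.integral_add int1 int2] at key1
  rw [intervalIntegral.integral_add int2 int3] at key2
  -- compute the pieces
  have e43 : (∫ x in (0:ℝ)..1, g 4 x * (starRingEnd ℂ) (f x))
      = -(lam ^ 2 * ((∫ x in (0:ℝ)..1, ‖f x‖^2 : ℝ) : ℂ)) := by
    have : (∫ x in (0:ℝ)..1, g 4 x * (starRingEnd ℂ) (f x))
        = ∫ x in (0:ℝ)..1, -(lam ^ 2 * ((‖f x‖^2 : ℝ) : ℂ)) := by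
      apply intervalIntegral.integral_congr
      intro x hx
      rw [uIcc_of_le h01] at hx
      have h := hode x hx
      have hx4 : g 4 x = -(lam^2 * f x) := by rw [hg]; linear_combination h
      simp only
      rw [hx4, neg_mul, mul_assoc, mul_conj_self]
    rw [this, intervalIntegral.integral_neg, intervalIntegral.integral_const_mul,
      intervalIntegral.integral_ofReal]
  have e22 : (∫ x in (0:ℝ)..1, g 2 x * (starRingEnd ℂ) (g 2 x))
      = ((∫ x in (0:ℝ)..1, ‖g 2 x‖^2 : ℝ) : ℂ) := by
    rw [← intervalIntegral.integral_ofReal]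
    apply intervalIntegral.integral_congr
    intro x hx
    exact mul_conj_self _
  rw [e43] at key1
  rw [e22] at key2
  show ((∫ x in (0:ℝ)..1, ‖g 2 x‖^2 : ℝ) : ℂ) + lam^2 * _ + ((c:ℂ)*lam + γ) * ((‖g 1 0‖^2 : ℝ) : ℂ) = 0
  linear_combination key2 - key1
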